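/- arXiv:2107.04492 — 2 statements merged into one kernel-verified Lean document; each statement's English description precedes it below -/
import Mathlib

section
/- Let u ∈ ℕ* and let i ≠ j be elements of supp(u). Then the following are equivalent: (1) σ_u(j) < σ_u(i) and there is no k in the closed interval between i and j with σ_u(k) < σ_u(j); (2) u factorizes as u = u'·i·u''·j·u''' with supp(u''') disjoint from the closed interval between i and j. -/
/-!
`σ_u` orders `supp(u)` exactly as the rightmost occurrences, read from the right. So if the
rightmost occurrence of `j` splits `u = v·j·w`, the letters `k` with `σ_u(k) < σ_u(j)` are
precisely those of `w`. Both conditions then say that `w` avoids `[[i,j]]` (hence `i` occurs in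
`v`); the inequality `σ_u(j) < σ_u(i)` comes from `i` lying left of that occurrence.
-/

/-- `sigmaW u x` is the number of distinct letters in the shortest suffix of
`u` containing `x` (the rank of `x` in the right-to-left order of rightmost
occurrences). -/
def sigmaW (u : List ℕ) (x : ℕ) : ℕ :=
  ((u.reverse.take (u.reverse.idxOf x + 1)).dedup).length

namespace List

theorem exists_eq_append_cons_notMem {α : Type*} {a : α} {l : List α} (h : a ∈ l) :
    ∃ s t, l = s ++ a :: t ∧ a ∉ t := by
  induction l with
  | nil => simp at h
  | cons b l ih =>
    by_cases hl : a ∈ l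
    · obtain ⟨s, t, rfl, ht⟩ := ih hl
      exact ⟨b :: s, t, rfl, ht⟩
    · obtain rfl : a = b := by simpa [hl] using h
      exact ⟨[], l, rfl, hl⟩

variable {α : Type*} [DecidableEq α]

theorem toFinset_take_subset_toFinset_take (l : List α) {m n : ℕ} (h : m ≤ n) :
    (l.take m).toFinset ⊆ (l.take n).toFinset := fun x hx => by
  simpa using (take_prefix_take_left h).subset (mem_toFinset.1 hx)

theorem toFinset_take_ssubset_toFinset_take {l : List α} {b : α} {m n : ℕ} (hb : b ∈ l)
    (hm : m ≤ l.idxOf b) (hn : l.idxOf b < n) :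
    (l.take m).toFinset ⊂ (l.take n).toFinset := by
  refine Finset.ssubset_iff_subset_ne.2 ⟨toFinset_take_subset_toFinset_take l (by omega), ?_⟩
  intro heq
  have hbn : b ∈ (l.take n).toFinset := by simpa [mem_take_iff_idxOf_lt hb] using hn
  rw [← heq, mem_toFinset, mem_take_iff_idxOf_lt hb] at hbn
  omega

variable {l v w : List α} {a b : α}

theorem idxOf_reverse_eq_length_of_eq_append_cons (hl : l = v ++ a :: w) (haw : a ∉ w) :
    l.reverse.idxOf a = w.length := by
  subst hl
  simp [idxOf_append_of_notMem (mt mem_reverse.1 haw)]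

theorem idxOf_reverse_lt_length_iff_mem (hl : l = v ++ a :: w) :
    l.reverse.idxOf b < w.length ↔ b ∈ w := by
  subst hl
  simpa using ((prefix_append w.reverse (a :: v.reverse)).mem_iff_idxOf_lt_length b).symm

end List

open List

theorem sigmaW_lt_sigmaW_iff {u : List ℕ} {a b : ℕ} (hb : b ∈ u) :
    sigmaW u a < sigmaW u b ↔ u.reverse.idxOf a < u.reverse.idxOf b := by
  simp only [sigmaW, ← card_toFinset]
  refine ⟨fun h => ?_, fun h => ?_⟩
  · contrapose! h
    exact Finset.card_le_card (toFinset_take_subset_toFinset_take _ (by omega))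
  · exact Finset.card_lt_card
      (toFinset_take_ssubset_toFinset_take (mem_reverse.2 hb) (by omega) (by omega))

section LastOccurrence

variable {u v w : List ℕ} {j k : ℕ}

theorem sigmaW_lt_sigmaW_iff_mem (hu : u = v ++ j :: w) (hjw : j ∉ w) :
    sigmaW u k < sigmaW u j ↔ k ∈ w := by
  rw [sigmaW_lt_sigmaW_iff (by simp [hu]), idxOf_reverse_eq_length_of_eq_append_cons hu hjw,
    idxOf_reverse_lt_length_iff_mem hu]

theorem sigmaW_lt_sigmaW_of_notMem (hu : u = v ++ j :: w) (hjw : j ∉ w) (hk : k ∈ u)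
    (hkj : k ≠ j) (hkw : k ∉ w) : sigmaW u j < sigmaW u k := by
  rw [sigmaW_lt_sigmaW_iff hk, idxOf_reverse_eq_length_of_eq_append_cons hu hjw]
  have hle : w.length ≤ u.reverse.idxOf k :=
    not_lt.1 (mt (idxOf_reverse_lt_length_iff_mem hu).1 hkw)
  have hne : u.reverse.idxOf k ≠ w.length := by
    rw [← idxOf_reverse_eq_length_of_eq_append_cons hu hjw]
    exact mt (idxOf_inj (mem_reverse.2 hk)).1 hkj
  omega

end LastOccurrence

/-- For a word u and distinct letters i, j ∈ supp(u), the
following are equivalent: (1) σ_u(j) < σ_u(i) and no k ∈ supp(u) in the closed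
interval between i and j has σ_u(k) < σ_u(j); (2) u factorizes as
u'·i·u''·j·u''' with supp(u''') disjoint from the interval between i and j. -/
theorem stmt_14 (u : List ℕ) (i j : ℕ) (hi : i ∈ u) (hj : j ∈ u) (hij : i ≠ j) :
    (sigmaW u j < sigmaW u i ∧
      ¬∃ k ∈ u, min i j ≤ k ∧ k ≤ max i j ∧ sigmaW u k < sigmaW u j) ↔
    (∃ u' u'' u''' : List ℕ, u = u' ++ i :: u'' ++ j :: u''' ∧
      ∀ k ∈ u''', k < min i j ∨ max i j < k) := by
  constructor
  · rintro ⟨-, hmin⟩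
    obtain ⟨v, w, hu, hjw⟩ := exists_eq_append_cons_notMem hj
    have hw : ∀ k ∈ w, k < min i j ∨ max i j < k := fun k hk => by
      by_contra hk'
      push Not at hk'
      exact hmin ⟨k, by simp [hu, hk], hk'.1, hk'.2, (sigmaW_lt_sigmaW_iff_mem hu hjw).2 hk⟩
    have hiv : i ∈ v := by
      rcases (by simpa [hu] using hi : i ∈ v ∨ i = j ∨ i ∈ w) with h | h | h
      · exact h
      · exact absurd h hij
      · rcases hw i h with h | h <;> omega
    obtain ⟨u', u'', rfl⟩ := append_of_mem hiv
    exact ⟨u', u'', w, by simp [hu], hw⟩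
  · rintro ⟨u', u'', u''', hu, hout⟩
    have hgap : ∀ k, min i j ≤ k → k ≤ max i j → k ∉ u''' := fun k h₁ h₂ hk => by
      rcases hout k hk with h | h <;> omega
    have hju : j ∉ u''' := hgap j (min_le_right i j) (le_max_right i j)
    refine ⟨sigmaW_lt_sigmaW_of_notMem hu hju hi hij (hgap i (min_le_left i j) (le_max_left i j)),
      ?_⟩
    rintro ⟨k, -, hk₁, hk₂, hk⟩
    exact hgap k hk₁ hk₂ ((sigmaW_lt_sigmaW_iff_mem hu hju).1 hk)
end

section
/- In the right patience sorting monoid rPS_n, the number of changes of the bottom row during the iterative left-to-right insertion of a word w ∈ [n]* (starting from the empty tableau) is at most n(n+1)/2, and this bound is attained: there is a word whose insertion produces n(n+1)/2 bottom-row changes. -/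
/-- An rPS-tableau is represented as the list of its columns, left to right,
each column a list of symbols with the bottom entry first.  Inserting `a`:
if `a` is greater than every bottom entry, a new column `[a]` is appended at
the right; otherwise the leftmost column whose bottom entry is ≥ a is slid up
and `a` is placed at its bottom. -/
def rpsInsert {n : ℕ} [NeZero n] :
    List (List (Fin n)) → Fin n → List (List (Fin n))
  | [], a => [[a]]
  | c :: rest, a => if a ≤ c.headI then (a :: c) :: rest else c :: rpsInsert rest a

/-- The bottom row of a tableau. -/
def bottomRow {n : ℕ} [NeZero n] (T : List (List (Fin n))) : List (Fin n) :=
  T.map List.headI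

/-- The number of steps at which the bottom row changes during the iterative
left-to-right insertion of the word w, starting from the empty tableau. -/
def rpsChanges {n : ℕ} [NeZero n] (w : List (Fin n)) : ℕ :=
  (w.foldl
    (fun s a =>
      (rpsInsert s.1 a,
        s.2 + if bottomRow (rpsInsert s.1 a) = bottomRow s.1 then 0 else 1))
    (([] : List (List (Fin n))), 0)).2

/-! The bottom row evolves on its own: inserting `a` replaces its leftmost entry `≥ a` by `a`, or
appends `a` if there is none, and the row stays strictly increasing. A change thus either appends
a symbol or replaces one by a strictly smaller one, so each change raises the potential
`∑ (n - b)` over the bottom row `b` by at least one. Since the row has distinct entries in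
`Fin n`, the potential never exceeds `∑_{b < n} (n - b) = n(n+1)/2`. The staircase word
`(n-1 ⋯ 0) (n-1 ⋯ 1) ⋯ (n-1)` raises it by exactly one at every letter. -/

open Finset

section RowInsertion

variable {α : Type*} [LinearOrder α]

def rowInsert : List α → α → List α
  | [], a => [a]
  | b :: r, a => if a ≤ b then a :: r else b :: rowInsert r a

def rowChanges : List α → List α → ℕ
  | _, [] => 0
  | r, a :: w => (if rowInsert r a = r then 0 else 1) + rowChanges (rowInsert r a) w

lemma rowChanges_singleton (r : List α) (a : α) :
    rowChanges r [a] = if rowInsert r a = r then 0 else 1 := by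
  simp [rowChanges]

lemma rowChanges_append (r w₁ w₂ : List α) :
    rowChanges r (w₁ ++ w₂) = rowChanges r w₁ + rowChanges (w₁.foldl rowInsert r) w₂ := by
  induction w₁ generalizing r with
  | nil => simp [rowChanges]
  | cons a w ih => simp [rowChanges, ih, Nat.add_assoc]

lemma mem_rowInsert {r : List α} {a x : α} (hx : x ∈ rowInsert r a) : x = a ∨ x ∈ r := by
  induction r with
  | nil => simpa [rowInsert] using hx
  | cons b r ih =>
    simp only [rowInsert] at hx
    split_ifs at hx <;> simp_all <;> tauto

lemma pairwise_lt_rowInsert {r : List α} (hr : r.Pairwise (· < ·)) (a : α) :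
    (rowInsert r a).Pairwise (· < ·) := by
  induction r with
  | nil => simp [rowInsert]
  | cons b r ih =>
    rw [List.pairwise_cons] at hr
    specialize ih hr.2
    simp only [rowInsert]
    split_ifs with hab
    · exact List.pairwise_cons.2 ⟨fun x hx => hab.trans_lt (hr.1 x hx), hr.2⟩
    · refine List.pairwise_cons.2 ⟨fun x hx => ?_, ih⟩
      rcases mem_rowInsert hx with rfl | hx
      exacts [lt_of_not_ge hab, hr.1 x hx]

lemma pairwise_lt_foldl_rowInsert {r : List α} (hr : r.Pairwise (· < ·)) (w : List α) :
    (w.foldl rowInsert r).Pairwise (· < ·) := by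
  induction w generalizing r with
  | nil => exact hr
  | cons a w ih => exact ih (pairwise_lt_rowInsert hr a)

lemma rowInsert_append_of_forall_lt {p : List α} {a : α} (hp : ∀ x ∈ p, x < a) (q : List α) :
    rowInsert (p ++ q) a = p ++ rowInsert q a := by
  induction p with
  | nil => rfl
  | cons b p ih =>
    simp only [List.mem_cons, forall_eq_or_imp] at hp
    simp [rowInsert, not_le.2 hp.1, ih hp.2]

lemma rowInsert_of_forall_lt {p : List α} {a : α} (hp : ∀ x ∈ p, x < a) :
    rowInsert p a = p ++ [a] := by
  simpa [rowInsert] using rowInsert_append_of_forall_lt hp []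

end RowInsertion

section Weight

variable {α : Type*} [LinearOrder α] {f : α → ℕ}

lemma sum_map_add_le_sum_map_rowInsert (hf : StrictAnti f) (r : List α) {a : α} (ha : 0 < f a) :
    (r.map f).sum + (if rowInsert r a = r then 0 else 1) ≤ ((rowInsert r a).map f).sum := by
  induction r with
  | nil => simpa [rowInsert] using Nat.one_le_of_lt ha
  | cons b r ih =>
    by_cases hab : a ≤ b
    · rcases hab.eq_or_lt with rfl | hlt
      · simp [rowInsert]
      · have := hf hlt
        simp [rowInsert, hab, hlt.ne]
        omega
    · simpa [rowInsert, hab, Nat.add_assoc] using ih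

lemma rowChanges_add_le (hf : StrictAnti f) (hpos : ∀ a, 0 < f a) (r w : List α) :
    rowChanges r w + (r.map f).sum ≤ ((w.foldl rowInsert r).map f).sum := by
  induction w generalizing r with
  | nil => simp [rowChanges]
  | cons a w ih =>
    have hstep := sum_map_add_le_sum_map_rowInsert hf r (hpos a)
    have hrest := ih (rowInsert r a)
    simp only [rowChanges, List.foldl_cons]
    omega

end Weight

section Staircase

variable {α : Type*} [LinearOrder α]

lemma foldl_rowInsert_reverse {p : List α} {x : α} {s : List α}
    (h : (p ++ x :: s).Pairwise (· < ·)) :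
    (x :: s).reverse.foldl rowInsert p = p ++ [x] ∧
      rowChanges p (x :: s).reverse = s.length + 1 := by
  have hpx : ∀ y ∈ p, y < x := fun y hy => (List.pairwise_append.1 h).2.2 y hy x (by simp)
  induction s generalizing x with
  | nil =>
    simp [rowChanges_singleton, rowInsert_of_forall_lt hpx]
  | cons y s ih =>
    have hxy : x < y := List.rel_of_pairwise_cons (List.pairwise_append.1 h).2.1 (by simp)
    obtain ⟨hfold, hcount⟩ := ih (h.sublist (by simp)) fun z hz => (hpx z hz).trans hxy
    have hstep : rowInsert (p ++ [y]) x = p ++ [x] := by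
      simp [rowInsert_append_of_forall_lt hpx, rowInsert, hxy.le]
    rw [List.reverse_cons, List.foldl_append, hfold, rowChanges_append, hfold, hcount,
      rowChanges_singleton, List.foldl_cons, List.foldl_nil, hstep]
    simp [hxy.ne, List.length_cons]

/-- For `l = [x₀ < x₁ < ⋯ < x_{L-1}]`, the word `(x_{L-1} ⋯ x₀) (x_{L-1} ⋯ x₁) ⋯ (x_{L-1})`. -/
def staircase (l : List α) : List α :=
  (List.range l.length).flatMap fun k => (l.drop k).reverse

lemma foldl_rowInsert_staircase_prefix {l : List α} (hl : l.Pairwise (· < ·)) {k : ℕ}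
    (hk : k ≤ l.length) :
    let w := (List.range k).flatMap fun i => (l.drop i).reverse
    w.foldl rowInsert [] = l.take k ∧ rowChanges [] w = ∑ i ∈ range k, (l.length - i) := by
  induction k with
  | zero => simp [rowChanges]
  | succ k ih =>
    obtain ⟨hfold, hcount⟩ := ih (by omega)
    have hdrop := List.drop_eq_getElem_cons (show k < l.length by omega)
    have hsplit : l.take k ++ l[k] :: l.drop (k + 1) = l := by
      rw [← hdrop, List.take_append_drop]
    obtain ⟨hfold', hcount'⟩ := foldl_rowInsert_reverse (hsplit ▸ hl)
    simp only [List.range_succ, List.flatMap_append, List.flatMap_singleton, List.foldl_append,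
      rowChanges_append, hfold, hcount, hdrop, hfold', hcount', List.take_add_one,
      List.getElem?_eq_getElem (show k < l.length by omega), Option.toList_some,
      sum_range_succ, List.length_drop, true_and]
    omega

end Staircase

lemma sum_range_sub_eq (n : ℕ) : ∑ i ∈ range n, (n - i) = n * (n + 1) / 2 := by
  calc ∑ i ∈ range n, (n - i) = ∑ i ∈ range n, (i + 1) := by
        rw [← sum_range_reflect]
        exact sum_congr rfl fun i hi => by rw [mem_range] at hi; omega
    _ = ∑ i ∈ range (n + 1), i := by rw [sum_range_succ']; rfl
    _ = n * (n + 1) / 2 := by rw [sum_range_id, Nat.add_sub_cancel, Nat.mul_comm]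

lemma rowChanges_staircase {α : Type*} [LinearOrder α] {l : List α} (hl : l.Pairwise (· < ·)) :
    rowChanges [] (staircase l) = l.length * (l.length + 1) / 2 :=
  (foldl_rowInsert_staircase_prefix hl le_rfl).2.trans (sum_range_sub_eq _)

lemma sum_map_sub_le_of_nodup {n : ℕ} {r : List (Fin n)} (hr : r.Nodup) :
    (r.map fun b : Fin n => n - (b : ℕ)).sum ≤ n * (n + 1) / 2 := by
  classical
  calc (r.map fun b : Fin n => n - (b : ℕ)).sum = ∑ b ∈ r.toFinset, (n - (b : ℕ)) :=
        (List.sum_toFinset _ hr).symm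
    _ ≤ ∑ b : Fin n, (n - (b : ℕ)) := sum_le_sum_of_subset (subset_univ _)
    _ = n * (n + 1) / 2 := by rw [Fin.sum_univ_eq_sum_range (fun i => n - i), sum_range_sub_eq]

section Tableau

variable {n : ℕ} [NeZero n]

lemma bottomRow_rpsInsert (T : List (List (Fin n))) (a : Fin n) :
    bottomRow (rpsInsert T a) = rowInsert (bottomRow T) a := by
  induction T with
  | nil => rfl
  | cons c T ih =>
    simp only [rpsInsert, bottomRow, List.map_cons, rowInsert] at ih ⊢
    split_ifs <;> simp [ih]

lemma rpsChanges_eq_rowChanges (w : List (Fin n)) : rpsChanges w = rowChanges [] w := by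
  suffices ∀ (T : List (List (Fin n))) (c : ℕ), (w.foldl (fun s a => (rpsInsert s.1 a,
      s.2 + if bottomRow (rpsInsert s.1 a) = bottomRow s.1 then 0 else 1)) (T, c)).2 =
      c + rowChanges (bottomRow T) w by
    exact (this [] 0).trans (Nat.zero_add _)
  intro T c
  induction w generalizing T c with
  | nil => simp [rowChanges]
  | cons a w ih => rw [List.foldl_cons, ih, bottomRow_rpsInsert, rowChanges, Nat.add_assoc]

lemma rpsChanges_le (w : List (Fin n)) : rpsChanges w ≤ n * (n + 1) / 2 := by
  have hanti : StrictAnti fun b : Fin n => n - (b : ℕ) := fun a b hab =>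
    Nat.sub_lt_sub_left a.isLt hab
  have hrow := pairwise_lt_foldl_rowInsert (List.Pairwise.nil (R := (· < ·))) w
  calc rpsChanges w = rowChanges [] w := rpsChanges_eq_rowChanges w
    _ ≤ ((w.foldl rowInsert []).map fun b : Fin n => n - (b : ℕ)).sum := by
        simpa using rowChanges_add_le hanti (fun b => Nat.sub_pos_of_lt b.isLt) [] w
    _ ≤ n * (n + 1) / 2 := sum_map_sub_le_of_nodup hrow.nodup

end Tableau

/-- The number of bottom-row changes during insertion of any word
w ∈ [n]* is at most n(n+1)/2, and this bound is attained by some word. -/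
theorem stmt_19 (n : ℕ) [NeZero n] :
    (∀ w : List (Fin n), rpsChanges w ≤ n * (n + 1) / 2) ∧
    (∃ w : List (Fin n), rpsChanges w = n * (n + 1) / 2) := by
  refine ⟨rpsChanges_le, staircase (List.finRange n), ?_⟩
  rw [rpsChanges_eq_rowChanges, rowChanges_staircase (List.pairwise_lt_finRange n),
    List.length_finRange]
end
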